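/- Let ω = (w_1, w_2, …, w_j) ∈ Ω_1 be a finite word with j > 1. Then n_{O_1(ω)} = n_ω + 1, where O_1(ω) = (1, …, 1 (w_1 − 1 times), w_2 + 1, w_3, …, w_j). Consequently, O_1(ω) is the immediate successor of ω in the reverse lexicographic order <_{Ω_1}, provided ω is not the maximal word of its sum level (i.e., ω is not of the form a single letter). -/

import Mathlib

/-- To a finite word `ω = (w₁, …, w_j)` (a list, head = `w₁`) associate the
nonnegative integer `n_ω` whose binary expansion is the concatenation of the
blocks `b̂_{w_j−1} b̂_{w_{j−1}−1} ⋯ b̂_{w_1−1}`, where `b̂_k` is a `0` followed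
by `k` ones.  Appending the block `b̂_k` on the right of a numeral of value `v`
yields `v * 2^(k+1) + (2^k − 1)`. -/
def wordVal (ω : List ℕ) : ℕ :=
  ω.reverse.foldl (fun v w => v * 2 ^ w + (2 ^ (w - 1) - 1)) 0

/-- The reverse lexicographic order `<_{Ω₁}` on finite words: first compare the
sums of the letters; for equal sums, compare the letters from the right,
lexicographically at the first position (from the right) where they differ. -/
def revLexLt (a b : List ℕ) : Prop :=
  a.sum < b.sum ∨
    (a.sum = b.sum ∧ ∃ t : ℕ, t < a.length ∧ t < b.length ∧
      a.reverse.take t = b.reverse.take t ∧ a.reverse.getD t 0 < b.reverse.getD t 0)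

private lemma getD_take_eq {l₁ l₂ : List ℕ} {t i : ℕ}
    (h : l₁.take t = l₂.take t) (hi : i < t) :
    l₁.getD i 0 = l₂.getD i 0 := by
  have h1 : l₁[i]? = l₂[i]? := by
    have h2 := congrArg (fun l : List ℕ => l[i]?) h
    simpa [List.getElem?_take, hi] using h2
  simp [List.getD_eq_getElem?_getD, h1]

private lemma foldl_replicate_one (k : ℕ) (x : ℕ) :
    (List.replicate k 1).foldl (fun v w => v * 2 ^ w + (2 ^ (w - 1) - 1)) x
      = x * 2 ^ k := by
  induction k generalizing x with
  | zero => simp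
  | succ n ih =>
      rw [List.replicate_succ, List.foldl_cons, ih, pow_succ]
      ring_nf

private lemma sum_ge_take_add_getD (l : List ℕ) (i : ℕ) (hi : i < l.length) :
    (l.take i).sum + l.getD i 0 ≤ l.sum := by
  have h1 := List.sum_take_add_sum_drop l (i + 1)
  have h2 : List.take (i + 1) l = List.take i l ++ [l.getD i 0] := by
    rw [List.take_succ, List.getD_eq_getElem l 0 hi]
    simp [List.getElem?_eq_getElem hi]
  have h3 : (List.take (i + 1) l).sum = (l.take i).sum + l.getD i 0 := by
    rw [h2]; simp
  omega

private lemma getD_mem {l : List ℕ} {i : ℕ} (hi : i < l.length) :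
    l.getD i 0 ∈ l := by
  rw [List.getD_eq_getElem l 0 hi]; exact List.getElem_mem hi

/-- For a finite word `ω = (w₁, w₂, …, w_j)` with `j > 1` and letters `≥ 1`,
the odometric image `O₁(ω) = (1,…,1 (w₁−1 times), w₂+1, w₃, …, w_j)` satisfies
`n_{O₁(ω)} = n_ω + 1`; consequently `O₁(ω)` is the immediate successor of `ω`
in the reverse lexicographic order `<_{Ω₁}`. -/
theorem wordVal_odometer_succ (w₁ w₂ : ℕ) (rest : List ℕ)
    (h1 : 1 ≤ w₁) (h2 : 1 ≤ w₂) (hrest : ∀ x ∈ rest, 1 ≤ x) :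
    wordVal (List.replicate (w₁ - 1) 1 ++ (w₂ + 1) :: rest) =
        wordVal (w₁ :: w₂ :: rest) + 1 ∧
      revLexLt (w₁ :: w₂ :: rest) (List.replicate (w₁ - 1) 1 ++ (w₂ + 1) :: rest) ∧
      ∀ c : List ℕ, c ≠ [] → (∀ x ∈ c, 1 ≤ x) →
        ¬ (revLexLt (w₁ :: w₂ :: rest) c ∧
            revLexLt c (List.replicate (w₁ - 1) 1 ++ (w₂ + 1) :: rest)) := by
  set r := rest.length with hrdef
  -- basic structural facts
  have ha_rev : (w₁ :: w₂ :: rest).reverse = (rest.reverse ++ [w₂]) ++ [w₁] := by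
    simp
  have hb_rev : (List.replicate (w₁ - 1) 1 ++ (w₂ + 1) :: rest).reverse
      = rest.reverse ++ (w₂ + 1) :: List.replicate (w₁ - 1) 1 := by
    simp
  have hrr : rest.reverse.length = r := by simp [hrdef]
  have hla : (w₁ :: w₂ :: rest).length = r + 2 := by simp [hrdef]
  have hlb : (List.replicate (w₁ - 1) 1 ++ (w₂ + 1) :: rest).length = r + w₁ := by
    simp; omega
  have hsum : (w₁ :: w₂ :: rest).sum
      = (List.replicate (w₁ - 1) 1 ++ (w₂ + 1) :: rest).sum := by
    simp [List.sum_append, List.sum_replicate]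
    omega
  -- getD values on the reverses
  have haD_r : (w₁ :: w₂ :: rest).reverse.getD r 0 = w₂ := by
    rw [ha_rev, List.getD_append _ _ _ _ (by simp [hrdef]), List.getD_append_right _ _ _ _ (by simp [hrdef])]
    simp [hrdef]
  have haD_r1 : (w₁ :: w₂ :: rest).reverse.getD (r + 1) 0 = w₁ := by
    rw [ha_rev, List.getD_append_right _ _ _ _ (by simp [hrdef])]
    simp [hrdef]
  have hbD_r : (List.replicate (w₁ - 1) 1 ++ (w₂ + 1) :: rest).reverse.getD r 0
      = w₂ + 1 := by
    rw [hb_rev, List.getD_append_right _ _ _ _ (by simp [hrdef])]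
    simp [hrdef]
  have hbD_hi : ∀ i, r < i → i < r + w₁ →
      (List.replicate (w₁ - 1) 1 ++ (w₂ + 1) :: rest).reverse.getD i 0 = 1 := by
    intro i hi hi'
    rw [hb_rev, List.getD_append_right _ _ _ _ (by simp; omega)]
    obtain ⟨k, hk, hk'⟩ : ∃ k, i - rest.reverse.length = k + 1 ∧ k < w₁ - 1 := by
      refine ⟨i - r - 1, by simp [hrr]; omega, by omega⟩
    rw [hk, List.getD_cons_succ, List.getD_eq_getElem _ _ (by simpa using hk'),
      List.getElem_replicate]
  have heq_lo : ∀ i, i < r → (w₁ :: w₂ :: rest).reverse.getD i 0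
      = (List.replicate (w₁ - 1) 1 ++ (w₂ + 1) :: rest).reverse.getD i 0 := by
    intro i hi
    rw [ha_rev, hb_rev, List.getD_append _ _ _ _ (by simp; omega),
      List.getD_append _ _ _ _ (by simp; omega),
      List.getD_append _ _ _ _ (by simp; omega)]
  -- Part 1 : the value identity
  refine ⟨?_, ?_, ?_⟩
  · obtain ⟨a1, rfl⟩ : ∃ a1, w₁ = a1 + 1 := ⟨w₁ - 1, by omega⟩
    obtain ⟨b1, rfl⟩ : ∃ b1, w₂ = b1 + 1 := ⟨w₂ - 1, by omega⟩
    have e1 : (List.replicate (a1 + 1 - 1) 1 ++ (b1 + 1 + 1) :: rest).reverse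
        = (rest.reverse ++ [b1 + 2]) ++ List.replicate a1 1 := by
      simp [List.append_assoc]
    have e2 : ((a1 + 1) :: (b1 + 1) :: rest).reverse
        = (rest.reverse ++ [b1 + 1]) ++ [a1 + 1] := by simp
    unfold wordVal
    rw [e1, e2, List.foldl_append, List.foldl_append, List.foldl_append, List.foldl_append,
      foldl_replicate_one]
    simp only [List.foldl_cons, List.foldl_nil, Nat.add_sub_cancel]
    set C := rest.reverse.foldl (fun v w => v * 2 ^ w + (2 ^ (w - 1) - 1)) 0 with hC
    have hp1 : (1 : ℕ) ≤ 2 ^ b1 := Nat.one_le_two_pow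
    have hp2 : (1 : ℕ) ≤ 2 ^ a1 := Nat.one_le_two_pow
    have hp3 : (1 : ℕ) ≤ 2 ^ (b1 + 1) := Nat.one_le_two_pow
    have : b1 + 2 - 1 = b1 + 1 := by omega
    rw [this]
    zify [hp1, hp2, hp3]
    ring
  -- Part 2 : revLexLt ω (O₁ ω)
  · refine Or.inr ⟨hsum, r, by omega, by omega, ?_, ?_⟩
    · rw [ha_rev, hb_rev, List.append_assoc, List.take_left' hrr, List.take_left' hrr]
    · rw [haD_r, hbD_r]; omega
  -- Part 3 : nothing strictly in between
  · rintro c hc hcpos ⟨hac, hcb⟩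
    -- sums are forced to be equal
    have hscc : (w₁ :: w₂ :: rest).sum = c.sum := by
      rcases hac with h | ⟨h, _⟩ <;> rcases hcb with h' | ⟨h', _⟩ <;> omega
    obtain ⟨hs1, t₁, ht₁a, ht₁c, htake1, hget1⟩ :
        (w₁ :: w₂ :: rest).sum = c.sum ∧ ∃ t : ℕ,
          t < (w₁ :: w₂ :: rest).length ∧ t < c.length ∧
          (w₁ :: w₂ :: rest).reverse.take t = c.reverse.take t ∧
          (w₁ :: w₂ :: rest).reverse.getD t 0 < c.reverse.getD t 0 := by
      rcases hac with h | h
      · omega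
      · exact h
    obtain ⟨hs2, t₂, ht₂c, ht₂b, htake2, hget2⟩ :
        c.sum = (List.replicate (w₁ - 1) 1 ++ (w₂ + 1) :: rest).sum ∧ ∃ t : ℕ,
          t < c.length ∧ t < (List.replicate (w₁ - 1) 1 ++ (w₂ + 1) :: rest).length ∧
          c.reverse.take t = (List.replicate (w₁ - 1) 1 ++ (w₂ + 1) :: rest).reverse.take t ∧
          c.reverse.getD t 0 < (List.replicate (w₁ - 1) 1 ++ (w₂ + 1) :: rest).reverse.getD t 0 := by
      rcases hcb with h | h
      · omega
      · exact h
    rw [hla] at ht₁a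
    rw [hlb] at ht₂b
    rcases lt_trichotomy t₂ r with hcase | hcase | hcase
    · -- t₂ < r : positions below r agree everywhere
      rcases lt_trichotomy t₁ t₂ with h | h | h
      · have e1 : c.reverse.getD t₁ 0
            = (List.replicate (w₁ - 1) 1 ++ (w₂ + 1) :: rest).reverse.getD t₁ 0 :=
          getD_take_eq htake2 h
        have e2 := heq_lo t₁ (by omega)
        omega
      · subst h
        have e2 := heq_lo t₁ (by omega)
        omega
      · have e1 : (w₁ :: w₂ :: rest).reverse.getD t₂ 0 = c.reverse.getD t₂ 0 :=
          getD_take_eq htake1 h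
        have e2 := heq_lo t₂ (by omega)
        omega
    · -- t₂ = r
      rw [hcase] at hget2 htake2 ht₂c
      rw [hbD_r] at hget2
      rcases lt_trichotomy t₁ r with h | h | h
      · have e1 : c.reverse.getD t₁ 0
            = (List.replicate (w₁ - 1) 1 ++ (w₂ + 1) :: rest).reverse.getD t₁ 0 :=
          getD_take_eq htake2 h
        have e2 := heq_lo t₁ h
        omega
      · rw [h, haD_r] at hget1
        omega
      · -- t₁ = r + 1 : use the sum
        have ht₁ : t₁ = r + 1 := by omega
        rw [ht₁] at hget1 htake1 ht₁c
        rw [haD_r1] at hget1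
        -- c.reverse agrees with (rest.reverse ++ [w₂]) on the first r+1 entries
        have hcr : c.reverse.length = c.length := by simp
        have hbound : (c.reverse.take (r + 1)).sum + c.reverse.getD (r + 1) 0
            ≤ c.reverse.sum := sum_ge_take_add_getD _ _ (by omega)
        have htk : c.reverse.take (r + 1) = rest.reverse ++ [w₂] := by
          rw [← htake1, ha_rev, List.take_left' (by simp only [List.length_append,
            List.length_reverse, List.length_cons, List.length_nil, hrdef, Nat.zero_add])]
        have hcsum : c.reverse.sum = c.sum := List.sum_reverse c
        have hrs : (rest.reverse ++ [w₂]).sum = rest.sum + w₂ := by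
          simp [List.sum_reverse]
        rw [htk, hcsum, hrs] at hbound
        have hasum : (w₁ :: w₂ :: rest).sum = w₁ + (w₂ + rest.sum) := by simp
        omega
    · -- t₂ > r : position t₂ of b.reverse is a 1, but letters of c are ≥ 1
      have e1 := hbD_hi t₂ hcase ht₂b
      rw [e1] at hget2
      have : c.reverse.getD t₂ 0 ∈ c.reverse := getD_mem (by simpa using ht₂c)
      have : 1 ≤ c.reverse.getD t₂ 0 := hcpos _ (by simpa using this)
      omega
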